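/- arXiv:1401.0091 — 4 statements merged into one kernel-verified Lean document; each statement's English description precedes it below -/
import Mathlib

section
/- Let R be a commutative ring with 1 and τ a refinable symmetric relation on the nonzero non-units. If R is a τ-r-BFR (bounded factorization on regular elements), then R satisfies τ-r-ACCP: every chain of principal ideals (a₁) ⊊ (a₂) ⊊ ⋯ with each aᵢ a regular nonzero non-unit and a_{i+1} occurring as a factor in some τ-regular-factorization of aᵢ stabilizes. -/
/-- A `τ`-factorization of `a`: `a = λ · a₁ ⋯ aₙ` with `λ` a unit, each `aᵢ` a
nonzero non-unit, and `aᵢ τ aⱼ` for all `i ≠ j` (via `Pairwise` and symmetry). -/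
def IsTauFactorization {R : Type*} [CommRing R] (τ : R → R → Prop)
    (a lam : R) (l : List R) : Prop :=
  IsUnit lam ∧ (∀ b ∈ l, b ≠ 0 ∧ ¬ IsUnit b) ∧ l.Pairwise τ ∧ a = lam * l.prod

/-- `τ` is refinable: replacing each factor of a `τ`-factorization by a
`τ`-factorization of that factor (with unit `λ·λ₁⋯λₙ`) again yields a
`τ`-factorization. Each list entry records a factor together with the unit and
factor list of a `τ`-factorization of it. -/
def TauRefinable {R : Type*} [CommRing R] (τ : R → R → Prop) : Prop :=
  ∀ (a lam : R) (L : List (R × R × List R)),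
    IsTauFactorization τ a lam (L.map (·.1)) →
    (∀ p ∈ L, IsTauFactorization τ p.1 p.2.1 p.2.2) →
    IsTauFactorization τ a (lam * (L.map (·.2.1)).prod) (L.flatMap (·.2.2))

lemma trivialTauFact {R : Type*} [CommRing R] (τ : R → R → Prop) (b : R)
    (hb : b ≠ 0 ∧ ¬ IsUnit b) : IsTauFactorization τ b 1 [b] := by
  refine ⟨isUnit_one, ?_, ?_, by simp⟩
  · intro x hx; simp at hx; subst hx; exact hb
  · simp

/-- If `τ` is refinable and `R` is a `τ`-r-BFR, then `R` satisfies `τ`-r-ACCP: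
there is no strictly ascending chain `(a₁) ⊊ (a₂) ⊊ ⋯` of principal ideals
generated by regular nonzero non-units in which each `a_{i+1}` occurs as a
factor of some `τ`-regular-factorization of `aᵢ`. -/
theorem stmt_11 {R : Type*} [CommRing R] (τ : R → R → Prop)
    (hsym : ∀ x y, τ x y → τ y x) (href : TauRefinable τ)
    (hBFR : ∀ a : R, a ∈ nonZeroDivisors R → a ≠ 0 → ¬ IsUnit a →
      ∃ N : ℕ, ∀ (lam : R) (l : List R),
        IsTauFactorization τ a lam l → l.length ≤ N) :
    ¬ ∃ c : ℕ → R,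
      (∀ i, c i ∈ nonZeroDivisors R ∧ c i ≠ 0 ∧ ¬ IsUnit (c i)) ∧
      (∀ i, ∃ (lam : R) (l : List R),
        IsTauFactorization τ (c i) lam l ∧ c (i + 1) ∈ l) ∧
      (∀ i, Ideal.span ({c i} : Set R) < Ideal.span {c (i + 1)}) := by
  rintro ⟨c, hreg, hfac, hlt⟩
  obtain ⟨N, hN⟩ := hBFR (c 0) (hreg 0).1 (hreg 0).2.1 (hreg 0).2.2
  have key : ∀ n, ∃ lam l, IsTauFactorization τ (c 0) lam l ∧
      c (n + 1) ∈ l ∧ n + 1 ≤ l.length := by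
    intro n
    induction n with
    | zero =>
      obtain ⟨lam, l, h, hm⟩ := hfac 0
      exact ⟨lam, l, h, hm, List.length_pos_iff.mpr (List.ne_nil_of_mem hm)⟩
    | succ n ih =>
      obtain ⟨lam, l, hl, hm, hlen⟩ := ih
      obtain ⟨lam', l', hl', hm'⟩ := hfac (n + 1)
      have h2 : 2 ≤ l'.length := by
        by_contra h
        push_neg at h
        have h1 : l'.length = 1 :=
          le_antisymm (by omega) (List.length_pos_iff.mpr (List.ne_nil_of_mem hm'))
        obtain ⟨x, hx⟩ := List.length_eq_one_iff.mp h1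
        subst hx
        simp at hm'
        subst hm'
        have heq : c (n + 1) = lam' * c (n + 2) := by simpa using hl'.2.2.2
        obtain ⟨u, rfl⟩ := hl'.1
        have hdvd : c (n + 1) ∣ c (n + 2) :=
          ⟨(↑u⁻¹ : Rˣ), by rw [heq]; rw [mul_comm (u : R)]; simp [mul_assoc]⟩
        exact (hlt (n + 1)).not_ge (Ideal.span_singleton_le_span_singleton.mpr hdvd)
      obtain ⟨l₁, l₂, rfl⟩ := List.append_of_mem hm
      set L : List (R × R × List R) :=
        l₁.map (fun b => (b, (1 : R), [b])) ++ (c (n + 1), lam', l') ::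
          l₂.map (fun b => (b, (1 : R), [b])) with hL
      have hmap : L.map (·.1) = l₁ ++ c (n + 1) :: l₂ := by
        simp [hL, Function.comp_def]
      have hall : ∀ p ∈ L, IsTauFactorization τ p.1 p.2.1 p.2.2 := by
        intro p hp
        simp only [hL, List.mem_append, List.mem_cons, List.mem_map] at hp
        rcases hp with ⟨b, hb, rfl⟩ | rfl | ⟨b, hb, rfl⟩
        · exact trivialTauFact τ b (hl.2.1 b (by simp [hb]))
        · exact hl'
        · exact trivialTauFact τ b (hl.2.1 b (by simp [hb]))
      have hres := href (c 0) lam L (hmap ▸ hl) hall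
      have hflat : L.flatMap (·.2.2) = l₁ ++ (l' ++ l₂) := by
        simp [hL, List.flatMap_append, List.flatMap_map, Function.comp]
      refine ⟨_, _, hres, ?_, ?_⟩
      · rw [hflat]; simp [hm']
      · rw [hflat]
        simp only [List.length_append, List.length_append, List.length_cons] at hlen ⊢
        omega
  obtain ⟨lam, l, hl, _, hlen⟩ := key N
  have := hN lam l hl
  omega
end

section
/- Let R be a commutative ring with 1 and τ a refinable symmetric relation on the nonzero non-units. If R satisfies τ-r-ACCP, then R is τ-r-atomic: every regular nonzero non-unit has a τ-regular-factorization into τ-r-atoms. -/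
/-- A `τ`-r-atom: a regular nonzero non-unit all of whose
`τ`-regular-factorizations are trivial. -/
def IsTauRAtom {R : Type*} [CommRing R] (τ : R → R → Prop) (a : R) : Prop :=
  a ∈ nonZeroDivisors R ∧ a ≠ 0 ∧ ¬ IsUnit a ∧
    ∀ (lam : R) (l : List R), IsTauFactorization τ a lam l → l.length = 1

/-- One step of the chains that `τ`-r-ACCP forbids. -/
def IsStrictTauRFactor {R : Type*} [CommRing R] (τ : R → R → Prop) (b a : R) : Prop :=
  a ∈ nonZeroDivisors R ∧ a ≠ 0 ∧ ¬ IsUnit a ∧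
    (∃ (lam : R) (l : List R), IsTauFactorization τ a lam l ∧ b ∈ l) ∧
    Ideal.span ({a} : Set R) < Ideal.span {b}

section

variable {R : Type*} [CommRing R] {τ : R → R → Prop}

theorem isTauFactorization_singleton {a : R} (ha₀ : a ≠ 0) (hnu : ¬ IsUnit a) :
    IsTauFactorization τ a 1 [a] :=
  ⟨isUnit_one, by simp [ha₀, hnu], List.pairwise_singleton τ a, by simp⟩

namespace IsTauFactorization

variable {a lam b : R} {l : List R}

theorem ne_nil (hf : IsTauFactorization τ a lam l) (hnu : ¬ IsUnit a) : l ≠ [] := by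
  rintro rfl
  exact hnu (by simpa [hf.2.2.2] using hf.1)

theorem eq_mul_prod_erase [DecidableEq R] (hf : IsTauFactorization τ a lam l) (hb : b ∈ l) :
    a = b * (lam * (l.erase b).prod) := by
  rw [hf.2.2.2, ← List.prod_erase hb]
  ring

theorem mem_nonZeroDivisors_of_mem (hf : IsTauFactorization τ a lam l)
    (ha : a ∈ nonZeroDivisors R) (hb : b ∈ l) : b ∈ nonZeroDivisors R := by
  classical
  rw [hf.eq_mul_prod_erase hb] at ha
  exact (mul_mem_nonZeroDivisors.mp ha).1

/-- Otherwise the cofactor of `b` would be a unit, and so would the remaining (nonempty)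
product of non-units. -/
theorem span_lt_span_of_mem (hf : IsTauFactorization τ a lam l) (ha : a ∈ nonZeroDivisors R)
    (hl : 2 ≤ l.length) (hb : b ∈ l) : Ideal.span ({a} : Set R) < Ideal.span {b} := by
  classical
  have hab := hf.eq_mul_prod_erase hb
  refine lt_of_le_not_ge (Ideal.span_singleton_le_span_singleton.mpr ⟨_, hab⟩) fun hba => ?_
  obtain ⟨t, hbt⟩ := Ideal.span_singleton_le_span_singleton.mp hba
  have hunit : IsUnit (lam * (l.erase b).prod) := by
    refine IsUnit.of_mul_eq_one_right t ((mul_cancel_left_mem_nonZeroDivisors ha).mp ?_)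
    calc a * (t * (lam * (l.erase b).prod)) = b * (lam * (l.erase b).prod) := by
          rw [hbt]; ring
      _ = a * 1 := by rw [← hab, mul_one]
  obtain ⟨c, hc⟩ : ∃ c, c ∈ l.erase b := by
    refine List.exists_mem_of_ne_nil _ fun h => ?_
    have := List.length_erase_of_mem hb
    rw [h, List.length_nil] at this
    omega
  exact (hf.2.1 c (List.mem_of_mem_erase hc)).2
    (List.prod_isUnit_iff.mp (IsUnit.mul_iff.mp hunit).2 c hc)

end IsTauFactorization

theorem TauRefinable.exists_isTauFactorization_of_forall_mem (href : TauRefinable τ)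
    (P : R → Prop) {a lam : R} {l : List R} (hf : IsTauFactorization τ a lam l)
    (hl : ∀ b ∈ l, ∃ (lam' : R) (l' : List R), IsTauFactorization τ b lam' l' ∧ ∀ c ∈ l', P c) :
    ∃ (lam' : R) (l' : List R), IsTauFactorization τ a lam' l' ∧ ∀ c ∈ l', P c := by
  choose! unit factors hfactors hP using hl
  let L := l.map fun b => (b, unit b, factors b)
  have hL : L.map (·.1) = l := by simp [L, Function.comp_def]
  refine ⟨_, _, href a lam L (hL ▸ hf) ?_, ?_⟩
  · simp only [L, List.mem_map]
    rintro _ ⟨b, hb, rfl⟩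
    exact hfactors b hb
  · simp only [L, List.mem_flatMap, List.mem_map]
    rintro c ⟨_, ⟨b, hb, rfl⟩, hc⟩
    exact hP b hb c hc

theorem wellFounded_isStrictTauRFactor
    (hACCP : ¬ ∃ c : ℕ → R,
      (∀ i, c i ∈ nonZeroDivisors R ∧ c i ≠ 0 ∧ ¬ IsUnit (c i)) ∧
      (∀ i, ∃ (lam : R) (l : List R),
        IsTauFactorization τ (c i) lam l ∧ c (i + 1) ∈ l) ∧
      (∀ i, Ideal.span ({c i} : Set R) < Ideal.span {c (i + 1)})) :
    WellFounded (IsStrictTauRFactor τ) :=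
  wellFounded_iff_isEmpty_descending_chain.mpr ⟨fun ⟨c, hc⟩ =>
    hACCP ⟨c, fun i => ⟨(hc i).1, (hc i).2.1, (hc i).2.2.1⟩, fun i => (hc i).2.2.2.1,
      fun i => (hc i).2.2.2.2⟩⟩

theorem exists_isTauFactorization_isStrictTauRFactor {a : R} (ha : a ∈ nonZeroDivisors R)
    (ha₀ : a ≠ 0) (hnu : ¬ IsUnit a) (hatom : ¬ IsTauRAtom τ a) :
    ∃ (lam : R) (l : List R),
      IsTauFactorization τ a lam l ∧ ∀ b ∈ l, IsStrictTauRFactor τ b a := by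
  obtain ⟨lam, l, hf, hlen⟩ : ∃ (lam : R) (l : List R), IsTauFactorization τ a lam l ∧
      l.length ≠ 1 := by
    by_contra! h
    exact hatom ⟨ha, ha₀, hnu, h⟩
  have hl : 2 ≤ l.length := by
    have := List.length_pos_of_ne_nil (hf.ne_nil hnu)
    omega
  exact ⟨lam, l, hf, fun b hb =>
    ⟨ha, ha₀, hnu, ⟨lam, l, hf, hb⟩, hf.span_lt_span_of_mem ha hl hb⟩⟩

end

theorem stmt_12_general {R : Type*} [CommRing R] (τ : R → R → Prop)
    (href : TauRefinable τ)
    (hACCP : ¬ ∃ c : ℕ → R,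
      (∀ i, c i ∈ nonZeroDivisors R ∧ c i ≠ 0 ∧ ¬ IsUnit (c i)) ∧
      (∀ i, ∃ (lam : R) (l : List R),
        IsTauFactorization τ (c i) lam l ∧ c (i + 1) ∈ l) ∧
      (∀ i, Ideal.span ({c i} : Set R) < Ideal.span {c (i + 1)})) :
    ∀ a : R, a ∈ nonZeroDivisors R → a ≠ 0 → ¬ IsUnit a →
      ∃ (lam : R) (l : List R), IsTauFactorization τ a lam l ∧
        ∀ b ∈ l, IsTauRAtom τ b := by
  intro a
  induction a using (wellFounded_isStrictTauRFactor hACCP).induction with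
  | _ a ih =>
    intro ha ha₀ hnu
    by_cases hatom : IsTauRAtom τ a
    · exact ⟨1, [a], isTauFactorization_singleton ha₀ hnu, by simpa using hatom⟩
    obtain ⟨lam, l, hf, hstrict⟩ := exists_isTauFactorization_isStrictTauRFactor ha ha₀ hnu hatom
    refine href.exists_isTauFactorization_of_forall_mem _ hf fun b hb => ?_
    exact ih b (hstrict b hb) (hf.mem_nonZeroDivisors_of_mem ha hb) (hf.2.1 b hb).1
      (hf.2.1 b hb).2

/-- If `τ` is refinable and `R` satisfies `τ`-r-ACCP, then `R` is `τ`-r-atomic: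
every regular nonzero non-unit has a `τ`-regular-factorization into `τ`-r-atoms. -/
theorem stmt_12 {R : Type*} [CommRing R] (τ : R → R → Prop)
    (hsym : ∀ x y, τ x y → τ y x) (href : TauRefinable τ)
    (hACCP : ¬ ∃ c : ℕ → R,
      (∀ i, c i ∈ nonZeroDivisors R ∧ c i ≠ 0 ∧ ¬ IsUnit (c i)) ∧
      (∀ i, ∃ (lam : R) (l : List R),
        IsTauFactorization τ (c i) lam l ∧ c (i + 1) ∈ l) ∧
      (∀ i, Ideal.span ({c i} : Set R) < Ideal.span {c (i + 1)})) :
    ∀ a : R, a ∈ nonZeroDivisors R → a ≠ 0 → ¬ IsUnit a →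
      ∃ (lam : R) (l : List R), IsTauFactorization τ a lam l ∧
        ∀ b ∈ l, IsTauRAtom τ b :=
  stmt_12_general τ href hACCP
end

section
/- Let R be a commutative ring with 1, τ symmetric on nonzero non-units, τ_reg = τ ∩ (Reg(R) × Reg(R)). In any τ_reg-U-factorization a = λ a₁⋯aₙ⌈b₁⋯bₘ⌉ of a non-unit a, every non-unit factor is essential; that is, n = 0 (there are no non-unit inessential divisors), equivalently in the notation above each aᵢ is a unit. -/
/-- `τ_reg := τ ∩ (Reg(R) × Reg(R))`. -/
def TauReg {R : Type*} [CommRing R] (τ : R → R → Prop) (x y : R) : Prop :=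
  τ x y ∧ x ∈ nonZeroDivisors R ∧ y ∈ nonZeroDivisors R

theorem isUnit_of_span_singleton_mul_eq {R : Type*} [CommRing R] {x b : R}
    (hb : b ∈ nonZeroDivisors R) (h : Ideal.span {x * b} = Ideal.span {b}) : IsUnit x := by
  obtain ⟨c, hc⟩ : x * b ∣ b := Ideal.span_singleton_le_span_singleton.mp h.ge
  refine IsUnit.of_mul_eq_one c ((isRegular_iff_mem_nonZeroDivisors.mpr hb).right ?_)
  change x * c * b = 1 * b
  linear_combination hc.symm

theorem stmt_14_general {R : Type*} [CommRing R] (τ : R → R → Prop)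
    (A B : List R)
    (hne : ∀ b ∈ A ++ B, b ≠ 0 ∧ ¬ IsUnit b)
    (htau : (A ++ B).Pairwise (TauReg τ))
    (hiness : ∀ x ∈ A, Ideal.span {x * B.prod} = Ideal.span ({B.prod} : Set R)) :
    A = [] := by
  obtain _ | ⟨x, rest⟩ := A
  · rfl
  have hB : B.prod ∈ nonZeroDivisors R :=
    Submonoid.list_prod_mem _ fun b hb =>
      ((List.pairwise_append.mp htau).2.2 x List.mem_cons_self b hb).2.2
  exact absurd (isUnit_of_span_singleton_mul_eq hB (hiness x List.mem_cons_self))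
    (hne x (by simp)).2

/-- In any `τ_reg`-U-factorization `a = λ a₁⋯aₙ ⌈b₁⋯bₘ⌉` of a non-unit `a`
(factors nonzero non-units, pairwise `τ_reg`-related, the `aᵢ` inessential,
the `bⱼ` essential), there are no inessential divisors: the list `A` of
inessential factors is empty. -/
theorem stmt_14 {R : Type*} [CommRing R] (τ : R → R → Prop)
    (hsym : ∀ x y, τ x y → τ y x)
    (a lam : R) (A B : List R) (hanu : ¬ IsUnit a)
    (hlam : IsUnit lam)
    (hne : ∀ b ∈ A ++ B, b ≠ 0 ∧ ¬ IsUnit b)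
    (htau : (A ++ B).Pairwise (TauReg τ))
    (hprod : a = lam * (A.prod * B.prod))
    (hiness : ∀ x ∈ A, Ideal.span {x * B.prod} = Ideal.span ({B.prod} : Set R))
    (hess : ∀ j : Fin B.length,
      Ideal.span ({(B.eraseIdx j).prod} : Set R) ≠ Ideal.span ({B.prod} : Set R)) :
    A = [] :=
  stmt_14_general τ A B hne htau hiness
end

section
/- Let R be a commutative ring with 1 in which x = xy implies x = 0 or y is a unit (R is présimplifiable). Then for nonzero a, b ∈ R, a ∼ b (i.e., (a) = (b)) implies a ≅ b (very strong associates). -/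
/-- In a présimplifiable ring (`x = x*y` implies `x = 0` or `y` a unit),
associate nonzero elements are very strong associates. -/
theorem stmt_17 {R : Type*} [CommRing R]
    (hpres : ∀ x y : R, x = x * y → x = 0 ∨ IsUnit y)
    (a b : R) (ha : a ≠ 0) (hb : b ≠ 0)
    (hab : Ideal.span {a} = Ideal.span ({b} : Set R)) :
    ∀ r : R, a = r * b → IsUnit r := by
  intro r hr
  have hb_mem : b ∈ Ideal.span ({a} : Set R) := hab ▸ Ideal.mem_span_singleton_self b
  obtain ⟨s, hs⟩ := Ideal.mem_span_singleton'.mp hb_mem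
  have : a = a * (s * r) := by
    calc a = r * b := hr
    _ = r * (s * a) := by rw [hs]
    _ = a * (s * r) := by ring
  rcases hpres a (s * r) this with h | h
  · exact absurd h ha
  · exact isUnit_of_mul_isUnit_right h
end
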